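/- Let T be a finite tree embedded in R^q (q ≥ 2) with edges mapped to straight line segments, such that along every edge the first coordinate x_1 is strictly monotone from parent to child (each child has larger x_1 than its parent). Let d > 0 be the minimum distance between any two disjoint (non-incident) edges of the embedding, and let φ : T × B → R^q be defined by φ(p, x) = φ_0(p) + (d/4)·(0, x) where φ_0 is the embedding and B is the unit ball of R^{q−1}. Then for every point z ∈ R^q, the fiber φ^{-1}(z) has cardinality at most the maximum vertex degree of T. -/

import Mathlib

/-!
All points of a fiber have the same first coordinate and lie within `d/2 < d` of each other, and
distinct points of a fiber have distinct tree components. Two tree points closer than `d` lie on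
incident edges, and since `x₁` increases strictly from parent to child, two incident edges meet a
hyperplane `x₁ = c` in two distinct points only if they are sibling edges. So a fiber injects into
the children of a single vertex.
-/

open Metric

/-- Extend a vector of `ℝ^{q−1}` to `ℝ^q` by prepending a first coordinate `0`. -/
noncomputable def padZero (q : ℕ) (x : EuclideanSpace ℝ (Fin (q - 1))) : EuclideanSpace ℝ (Fin q) :=
  (WithLp.equiv 2 (Fin q → ℝ)).symm
    (fun i => if h : (i : ℕ) = 0 then 0 else x ⟨(i : ℕ) - 1, by omega⟩)

open Set

section Segment

variable {𝕜 E : Type*} [Field 𝕜] [LinearOrder 𝕜] [IsStrictOrderedRing 𝕜]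
  [AddCommGroup E] [Module 𝕜 E] (ℓ : E →ₗ[𝕜] 𝕜)

theorem injOn_segment_of_ne {a b : E} (hab : ℓ a ≠ ℓ b) : InjOn ℓ (segment 𝕜 a b) := by
  rw [segment_eq_image_lineMap]
  refine InjOn.image_of_comp fun s _ t _ hst => ?_
  simp only [Function.comp_apply, AffineMap.lineMap_apply, vsub_eq_sub, vadd_eq_add, map_add,
    map_smul, map_sub, smul_eq_mul, add_left_inj] at hst
  exact mul_right_cancel₀ (sub_ne_zero.mpr hab.symm) hst

theorem map_mem_Icc_of_mem_segment {a b p : E} (hab : ℓ a ≤ ℓ b) (hp : p ∈ segment 𝕜 a b) :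
    ℓ p ∈ Icc (ℓ a) (ℓ b) := by
  have h := mem_image_of_mem ℓ.toAffineMap hp
  rw [image_segment] at h
  simpa [segment_eq_Icc hab] using h

theorem eq_of_mem_segment_of_mem_segment_of_map_eq {a b c p p' : E} (hab : ℓ a < ℓ b)
    (hbc : ℓ b < ℓ c) (hp : p ∈ segment 𝕜 a b) (hp' : p' ∈ segment 𝕜 b c) (h : ℓ p = ℓ p') :
    p = p' := by
  have hpb : ℓ p ≤ ℓ b := (map_mem_Icc_of_mem_segment ℓ hab.le hp).2
  have hbp' : ℓ b ≤ ℓ p' := (map_mem_Icc_of_mem_segment ℓ hbc.le hp').1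
  have hp_eq : p = b :=
    injOn_segment_of_ne ℓ hab.ne hp (right_mem_segment 𝕜 a b) (by linarith)
  have hp'_eq : p' = b :=
    injOn_segment_of_ne ℓ hbc.ne hp' (left_mem_segment 𝕜 b c) (by linarith)
  rw [hp_eq, hp'_eq]

end Segment

theorem padZero_apply (q : ℕ) (x : EuclideanSpace ℝ (Fin (q - 1))) (i : Fin q) :
    padZero q x i = if h : (i : ℕ) = 0 then 0 else x ⟨(i : ℕ) - 1, by omega⟩ := rfl

theorem norm_padZero (q : ℕ) (x : EuclideanSpace ℝ (Fin (q - 1))) : ‖padZero q x‖ = ‖x‖ := by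
  cases q with
  | zero => simp [EuclideanSpace.norm_eq]
  | succ k =>
    rw [EuclideanSpace.norm_eq, EuclideanSpace.norm_eq, Fin.sum_univ_succ]
    simp [padZero_apply]

theorem padZero_injective (q : ℕ) : Function.Injective (padZero q) := by
  intro x y h
  ext j
  have hj : (j : ℕ) + 1 < q := by omega
  have hcoord := congrArg (fun w => w ⟨(j : ℕ) + 1, hj⟩) h
  simp only [padZero_apply] at hcoord
  simpa using hcoord

def padFiber (q : ℕ) (T : Set (EuclideanSpace ℝ (Fin q))) (r : ℝ) (z : EuclideanSpace ℝ (Fin q)) :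
    Set (EuclideanSpace ℝ (Fin q) × EuclideanSpace ℝ (Fin (q - 1))) :=
  {px | px.1 ∈ T ∧ px.2 ∈ closedBall 0 1 ∧ px.1 + r • padZero q px.2 = z}

namespace padFiber

variable {q : ℕ} {T : Set (EuclideanSpace ℝ (Fin q))} {r : ℝ} {z : EuclideanSpace ℝ (Fin q)}

theorem fst_apply_zero {px} (hpx : px ∈ padFiber q T r z) (h : 0 < q) :
    px.1 ⟨0, h⟩ = z ⟨0, h⟩ := by
  rw [← hpx.2.2]
  simp [padZero_apply]

theorem dist_fst_le (hr : 0 ≤ r) {px px'} (hpx : px ∈ padFiber q T r z)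
    (hpx' : px' ∈ padFiber q T r z) : dist px.1 px'.1 ≤ 2 * r := by
  have hdiff : px.1 - px'.1 = r • padZero q px'.2 - r • padZero q px.2 := by
    linear_combination (norm := module) hpx.2.2.trans hpx'.2.2.symm
  have hy : ‖px.2‖ ≤ 1 := by simpa using hpx.2.1
  have hy' : ‖px'.2‖ ≤ 1 := by simpa using hpx'.2.1
  calc dist px.1 px'.1 ≤ ‖r • padZero q px'.2‖ + ‖r • padZero q px.2‖ := by
        rw [dist_eq_norm, hdiff]; exact norm_sub_le _ _
    _ = r * ‖px'.2‖ + r * ‖px.2‖ := by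
        rw [norm_smul, norm_smul, norm_padZero, norm_padZero, Real.norm_of_nonneg hr]
    _ ≤ 2 * r := by nlinarith

theorem injOn_fst (hr : r ≠ 0) : InjOn Prod.fst (padFiber q T r z) := by
  intro px hpx px' hpx' h
  have hpad : r • padZero q px.2 = r • padZero q px'.2 := by
    have := hpx.2.2.trans hpx'.2.2.symm
    rwa [h, add_right_inj] at this
  exact Prod.ext h (padZero_injective q (smul_right_injective _ hr hpad))

end padFiber

section Tree

variable {V : Type*} {root : V} {parent : V → V}

/-- `R a v` reads "`a` lies on the edge from `v` to its parent". -/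
theorem ncard_le_sup_degree [Fintype V] [DecidableEq V] {α : Type*} (A : Set α) (R : α → V → Prop)
    (hR : ∀ a ∈ A, ∃ v, v ≠ root ∧ R a v)
    (hsib : ∀ a ∈ A, ∀ a' ∈ A, a ≠ a' → ∀ v v', v ≠ root → v' ≠ root → R a v → R a' v' →
      v ≠ v' ∧ parent v = parent v') :
    A.ncard ≤ Finset.univ.sup (fun v : V =>
      (Finset.univ.filter (fun w : V => w ≠ root ∧ parent w = v)).card +
        (if v = root then 0 else 1)) := by
  rcases A.eq_empty_or_nonempty with rfl | ⟨a₀, ha₀⟩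
  · simp
  have : Nonempty V := ⟨root⟩
  choose! e he_ne he using hR
  set u := parent (e a₀)
  have hchild : ∀ a ∈ A, e a ∈ Finset.univ.filter (fun w : V => w ≠ root ∧ parent w = u) := by
    intro a ha
    refine Finset.mem_filter.mpr ⟨Finset.mem_univ _, he_ne a ha, ?_⟩
    by_cases h : a = a₀
    · rw [h]
    · exact (hsib a ha a₀ ha₀ h _ _ (he_ne a ha) (he_ne a₀ ha₀) (he a ha) (he a₀ ha₀)).2
  have hinj : InjOn e A := fun a ha a' ha' h => by
    by_contra hne
    exact (hsib a ha a' ha' hne _ _ (he_ne a ha) (he_ne a' ha') (he a ha) (he a' ha')).1 h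
  have hcard : A.ncard ≤ (Finset.univ.filter (fun w : V => w ≠ root ∧ parent w = u)).card := by
    rw [← ncard_coe_finset]
    exact ncard_le_ncard_of_injOn e hchild hinj
  exact Finset.le_sup_of_le (Finset.mem_univ u) (hcard.trans (Nat.le_add_right _ _))

variable {E : Type*} [NormedAddCommGroup E] [NormedSpace ℝ E] {φ₀ : V → E} {d : ℝ}

theorem sibling_edges_of_dist_lt (ℓ : E →ₗ[ℝ] ℝ)
    (hmono : ∀ v : V, v ≠ root → ℓ (φ₀ (parent v)) < ℓ (φ₀ v))
    (hdist : ∀ v w : V, v ≠ root → w ≠ root →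
      ({v, parent v} : Set V) ∩ {w, parent w} = ∅ →
      ∀ p ∈ segment ℝ (φ₀ (parent v)) (φ₀ v),
        ∀ p' ∈ segment ℝ (φ₀ (parent w)) (φ₀ w), d ≤ dist p p')
    {v v' : V} (hv : v ≠ root) (hv' : v' ≠ root) {p p' : E}
    (hp : p ∈ segment ℝ (φ₀ (parent v)) (φ₀ v)) (hp' : p' ∈ segment ℝ (φ₀ (parent v')) (φ₀ v'))
    (hne : p ≠ p') (hℓ : ℓ p = ℓ p') (hpp' : dist p p' < d) :
    v ≠ v' ∧ parent v = parent v' := by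
  have hsame : v ≠ v' := by
    rintro rfl
    exact hne (injOn_segment_of_ne ℓ (hmono v hv).ne hp hp' hℓ)
  obtain ⟨u, hu, hu'⟩ : (({v, parent v} : Set V) ∩ {v', parent v'}).Nonempty :=
    nonempty_iff_ne_empty.mpr fun h => (hdist v v' hv hv' h p hp p' hp').not_gt hpp'
  simp only [mem_insert_iff, mem_singleton_iff] at hu hu'
  rcases hu with hu | hu <;> rcases hu' with hu' | hu'
  · exact absurd (hu.symm.trans hu') hsame
  · have hvv' : parent v' = v := hu'.symm.trans hu
    have hchild := hmono v' hv'
    rw [hvv'] at hp' hchild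
    exact absurd (eq_of_mem_segment_of_mem_segment_of_map_eq ℓ (hmono v hv) hchild hp hp' hℓ) hne
  · have hv'v : parent v = v' := hu.symm.trans hu'
    have hchild := hmono v hv
    rw [hv'v] at hp hchild
    exact absurd (eq_of_mem_segment_of_mem_segment_of_map_eq ℓ (hmono v' hv') hchild hp' hp
      hℓ.symm).symm hne
  · exact ⟨hsame, hu.symm.trans hu'⟩

end Tree

/-- A finite rooted tree with vertex set `V`, root `root`, and parent map `parent`, is
embedded in `ℝ^q` by `φ₀`, with edges the segments from each non-root vertex to its
parent, strictly increasing in the first coordinate from parent to child, injectively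
(non-incident edges have disjoint images), and `d > 0` bounds below the distance
between non-incident edges.  Then every fiber of
`φ(p, x) = p + (d/4)·(0, x)` on `T × B(0,1)` has at most `maxdegree(T)` points. -/
theorem stmt14 (q : ℕ) (hq : 2 ≤ q)
    (V : Type) [Fintype V] [DecidableEq V]
    (root : V) (parent : V → V)
    (φ₀ : V → EuclideanSpace ℝ (Fin q))
    (hmono : ∀ v : V, v ≠ root → φ₀ (parent v) ⟨0, by omega⟩ < φ₀ v ⟨0, by omega⟩)
    (d : ℝ) (hd : 0 < d)
    (hdist : ∀ v w : V, v ≠ root → w ≠ root →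
      ({v, parent v} : Set V) ∩ {w, parent w} = ∅ →
      ∀ p ∈ segment ℝ (φ₀ (parent v)) (φ₀ v),
        ∀ p' ∈ segment ℝ (φ₀ (parent w)) (φ₀ w), d ≤ dist p p') :
    ∀ z : EuclideanSpace ℝ (Fin q),
      Set.ncard {px : EuclideanSpace ℝ (Fin q) × EuclideanSpace ℝ (Fin (q - 1)) |
          (∃ v : V, v ≠ root ∧ px.1 ∈ segment ℝ (φ₀ (parent v)) (φ₀ v)) ∧
          px.2 ∈ closedBall (0 : EuclideanSpace ℝ (Fin (q - 1))) 1 ∧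
          px.1 + (d / 4) • padZero q px.2 = z} ≤
        Finset.univ.sup (fun v : V =>
          (Finset.univ.filter (fun w : V => w ≠ root ∧ parent w = v)).card +
            (if v = root then 0 else 1)) := by
  intro z
  have hq0 : 0 < q := by omega
  refine ncard_le_sup_degree
    (padFiber q {p | ∃ v : V, v ≠ root ∧ p ∈ segment ℝ (φ₀ (parent v)) (φ₀ v)} (d / 4) z)
    (fun px v => px.1 ∈ segment ℝ (φ₀ (parent v)) (φ₀ v)) (fun _ hpx => hpx.1) ?_
  intro px hpx px' hpx' hne v v' hv hv' hp hp'
  refine sibling_edges_of_dist_lt (EuclideanSpace.proj ⟨0, hq0⟩ : _ →L[ℝ] ℝ).toLinearMap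
    hmono hdist hv hv' hp hp' (fun h => hne (padFiber.injOn_fst (by positivity) hpx hpx' h)) ?_ ?_
  · exact (padFiber.fst_apply_zero hpx hq0).trans (padFiber.fst_apply_zero hpx' hq0).symm
  · linarith [padFiber.dist_fst_le (by positivity) hpx hpx']
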